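/- arXiv:1705.03045 — 3 statements merged into one kernel-verified Lean document; each statement's English description precedes it below -/
import Mathlib

section
/- (Weak non-Boolean Groemer integral theorem.) Let L be an orthocomplemented lattice on which a group G acts by automorphisms of orthocomplemented lattices, let A be an abelian group with trivial G-action, and let B ⊆ L be a subset closed under finite meets such that G·B = {g·b : g ∈ G, b ∈ B} is an orthogonal generating set for L. Then the restriction map from the set of G-invariant additive measures L → A to the set of N_G(B)-invariant functions ν : B → A satisfying ν(b₁ ⊔ b₂) = ν(b₁) + ν(b₂) for all b₁, b₂ ∈ B with b₁ ⊥ b₂ is injective. -/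
/-- An orthocomplemented lattice: a bounded lattice with an orthocomplementation `xᶜ`
which is a complement, an involution, and order-reversing. -/
class Ortho (L : Type*) extends Lattice L, BoundedOrder L, Compl L where
  sup_compl : ∀ x : L, x ⊔ xᶜ = ⊤
  inf_compl : ∀ x : L, x ⊓ xᶜ = ⊥
  compl_compl : ∀ x : L, xᶜᶜ = x
  compl_le_compl : ∀ x y : L, x ≤ y → yᶜ ≤ xᶜ

/-- An action of a group `G` on an orthocomplemented lattice `L` by automorphisms of
orthocomplemented lattices. -/
structure OrthoAction (G L : Type*) [Group G] [Ortho L] where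
  ρ : G → L → L
  bij : ∀ g, Function.Bijective (ρ g)
  map_one : ρ 1 = id
  map_mul : ∀ g h, ρ (g * h) = ρ g ∘ ρ h
  map_bot : ∀ g, ρ g ⊥ = ⊥
  map_top : ∀ g, ρ g ⊤ = ⊤
  map_inf : ∀ g x y, ρ g (x ⊓ y) = ρ g x ⊓ ρ g y
  map_sup : ∀ g x y, ρ g (x ⊔ y) = ρ g x ⊔ ρ g y
  map_compl : ∀ g x, ρ g xᶜ = (ρ g x)ᶜ

/-!
Every element of `L` is an orthogonal join of translates `g·c` with `c ∈ B₀`. An additive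
measure sends such a join to the sum of its values on the translates, and a `G`-invariant one
gives `g·c` the same value as `c`. So a `G`-invariant additive measure is determined by its
restriction to `B₀`.
-/

def OrthoAdditive {L A : Type*} [Ortho L] [Add A] (ν : L → A) : Prop :=
  ∀ x y : L, y ≤ xᶜ → ν (x ⊔ y) = ν x + ν y

namespace OrthoAdditive

variable {L A : Type*} [Ortho L]

theorem map_bot [AddMonoid A] [IsLeftCancelAdd A] {ν : L → A} (hν : OrthoAdditive ν) :
    ν ⊥ = 0 := by
  have h := hν ⊥ ⊥ bot_le
  rwa [sup_idem, left_eq_add] at h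

theorem map_finsetSup [AddCommMonoid A] [IsLeftCancelAdd A] {ν : L → A}
    (hν : OrthoAdditive ν) {ι : Type*} {s : Finset ι} {b : ι → L}
    (hb : (s : Set ι).Pairwise fun i j => b j ≤ (b i)ᶜ) :
    ν (s.sup b) = ∑ i ∈ s, ν (b i) := by
  classical
  induction s using Finset.induction_on with
  | empty => simp [hν.map_bot]
  | @insert i t hi ih =>
    rw [Finset.coe_insert, Set.pairwise_insert] at hb
    have hle : t.sup b ≤ (b i)ᶜ :=
      Finset.sup_le fun j hj => (hb.2 j hj fun h => hi (h ▸ hj)).1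
    rw [Finset.sup_insert, hν _ _ hle, ih hb.1, Finset.sum_insert hi]

end OrthoAdditive

theorem stmt_12_general {G L : Type*} [Group G] [Ortho L] (a : OrthoAction G L)
    (A : Type*) [AddCommGroup A] (B₀ : Set L)
    -- `G·B₀` is an orthogonal generating set for `L`:
    (hgen : ∀ x : L, ∃ (k : ℕ) (b : Fin k → L),
      (∀ i, ∃ (g : G) (c : L), c ∈ B₀ ∧ b i = a.ρ g c) ∧
      (∀ i j, i ≠ j → b j ≤ (b i)ᶜ) ∧ x = Finset.univ.sup b) :
    ∀ ν₁ ν₂ : L → A,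
      (∀ x y : L, y ≤ xᶜ → ν₁ (x ⊔ y) = ν₁ x + ν₁ y) →
      (∀ (g : G) (x : L), ν₁ (a.ρ g x) = ν₁ x) →
      (∀ x y : L, y ≤ xᶜ → ν₂ (x ⊔ y) = ν₂ x + ν₂ y) →
      (∀ (g : G) (x : L), ν₂ (a.ρ g x) = ν₂ x) →
      (∀ b ∈ B₀, ν₁ b = ν₂ b) → ν₁ = ν₂ := by
  intro ν₁ ν₂ h₁ hinv₁ h₂ hinv₂ hB
  funext x
  obtain ⟨k, b, hb, horth, rfl⟩ := hgen x
  have hpair : ((Finset.univ : Finset (Fin k)) : Set (Fin k)).Pairwise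
      fun i j => b j ≤ (b i)ᶜ := fun i _ j _ hij => horth i j hij
  have hterm : ∀ i, ν₁ (b i) = ν₂ (b i) := fun i => by
    obtain ⟨g, c, hc, hbi⟩ := hb i
    rw [hbi, hinv₁, hinv₂, hB c hc]
  rw [OrthoAdditive.map_finsetSup h₁ hpair, OrthoAdditive.map_finsetSup h₂ hpair]
  exact Finset.sum_congr rfl fun i _ => hterm i

/-- **Weak non-Boolean Groemer integral theorem.**  If `B₀ ⊆ L` is closed under finite
meets and `G·B₀` is an orthogonal generating set for `L`, then the restriction map from
`G`-invariant additive measures `L → A` to (`N_G(B₀)`-invariant, additive) functions on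
`B₀` is injective: two `G`-invariant additive measures agreeing on `B₀` are equal. -/
theorem stmt_12 {G L : Type*} [Group G] [Ortho L] (a : OrthoAction G L)
    (A : Type*) [AddCommGroup A] (B₀ : Set L)
    (hmeet : ∀ x ∈ B₀, ∀ y ∈ B₀, x ⊓ y ∈ B₀)
    -- `G·B₀` is an orthogonal generating set for `L`:
    (hgen : ∀ x : L, ∃ (k : ℕ) (b : Fin k → L),
      (∀ i, ∃ (g : G) (c : L), c ∈ B₀ ∧ b i = a.ρ g c) ∧
      (∀ i j, i ≠ j → b j ≤ (b i)ᶜ) ∧ x = Finset.univ.sup b) :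
    ∀ ν₁ ν₂ : L → A,
      (∀ x y : L, y ≤ xᶜ → ν₁ (x ⊔ y) = ν₁ x + ν₁ y) →
      (∀ (g : G) (x : L), ν₁ (a.ρ g x) = ν₁ x) →
      (∀ x y : L, y ≤ xᶜ → ν₂ (x ⊔ y) = ν₂ x + ν₂ y) →
      (∀ (g : G) (x : L), ν₂ (a.ρ g x) = ν₂ x) →
      (∀ b ∈ B₀, ν₁ b = ν₂ b) → ν₁ = ν₂ :=
  stmt_12_general a A B₀ hgen
end

section
/- Let L be an orthocomplemented lattice and let B ⊆ L be an orthogonal generating set for L. Under the bijection between additive measures ν : L → ℝ and ℝ-linear functionals ℓ : M_ℝ → ℝ (given by ν = ℓ ∘ π_ℝ), the positive measures (those with ν(x) ≥ 0 for all x ∈ L) correspond exactly to the linear functionals that are nonnegative on π_ℝ(B), i.e., M₊(L) is in bijection with the dual cone {ℓ : M_ℝ → ℝ linear : ℓ(π_ℝ(b)) ≥ 0 for all b ∈ B}. -/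
open TensorProduct

/-- The subgroup `S` of the free abelian group on `L` generated by the elements
`(x ⊔ y) - x - y` for orthogonal `x, y` (i.e. `y ≤ xᶜ`). -/
def orthoRel (L : Type*) [Ortho L] : AddSubgroup (FreeAbelianGroup L) :=
  AddSubgroup.closure {a | ∃ x y : L, y ≤ xᶜ ∧
    a = FreeAbelianGroup.of (x ⊔ y) - FreeAbelianGroup.of x - FreeAbelianGroup.of y}

/-- `M(L)`: the quotient of the free abelian group on `L` by the subgroup `S`. -/
abbrev MM (L : Type*) [Ortho L] := FreeAbelianGroup L ⧸ orthoRel L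

/-- `M_ℝ = M(L) ⊗_ℤ ℝ`. -/
abbrev MMR (L : Type*) [Ortho L] := ℝ ⊗[ℤ] MM L

/-- The universal real measure `π_ℝ : L → M_ℝ`. -/
noncomputable def piR (L : Type*) [Ortho L] : L → MMR L :=
  fun x => (1 : ℝ) ⊗ₜ[ℤ] (QuotientAddGroup.mk (FreeAbelianGroup.of x) : MM L)

/-! Additive measures on `L` are exactly the additive maps on `M(L)`, since the relations defining
`M(L)` are the additivity equations, and these extend uniquely to `ℝ`-linear functionals on
`M_ℝ = ℝ ⊗ M(L)`. Positivity on `B` already gives positivity everywhere: every element is a finite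
orthogonal join of elements of `B`, and an additive measure is additive over such joins. -/

namespace Ortho

variable {L : Type*} [Ortho L]

abbrev IsAdditiveMeasure (ν : L → ℝ) : Prop :=
  ∀ x y : L, y ≤ xᶜ → ν (x ⊔ y) = ν x + ν y

theorem mk_of_sup_of_le_compl {x y : L} (h : y ≤ xᶜ) :
    (QuotientAddGroup.mk (FreeAbelianGroup.of (x ⊔ y)) : MM L) =
      QuotientAddGroup.mk (FreeAbelianGroup.of x) +
        QuotientAddGroup.mk (FreeAbelianGroup.of y) := by
  rw [← sub_eq_zero, ← sub_sub, ← QuotientAddGroup.mk_sub, ← QuotientAddGroup.mk_sub]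
  exact (QuotientAddGroup.eq_zero_iff _).2 (AddSubgroup.subset_closure ⟨x, y, h, rfl⟩)

theorem orthoRel_le_ker_lift {ν : L → ℝ} (hν : IsAdditiveMeasure ν) :
    orthoRel L ≤ (FreeAbelianGroup.lift ν).ker := by
  rw [orthoRel, AddSubgroup.closure_le]
  rintro _ ⟨x, y, h, rfl⟩
  simp [hν x y h]

noncomputable def measureEquivAddMonoidHom :
    {ν : L → ℝ // IsAdditiveMeasure ν} ≃ (MM L →+ ℝ) where
  toFun ν := QuotientAddGroup.lift _ (FreeAbelianGroup.lift ν.1) (orthoRel_le_ker_lift ν.2)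
  invFun f := ⟨fun x => f (QuotientAddGroup.mk (FreeAbelianGroup.of x)), fun x y h => by
    simp only [mk_of_sup_of_le_compl h, map_add]⟩
  left_inv ν := by ext; simp
  right_inv f :=
    QuotientAddGroup.addMonoidHom_ext _ (FreeAbelianGroup.lift_ext _ _ fun x => by simp)

noncomputable def measureEquivDual : {ν : L → ℝ // IsAdditiveMeasure ν} ≃ (MMR L →ₗ[ℝ] ℝ) :=
  measureEquivAddMonoidHom.trans
    ((addMonoidHomLequivInt ℝ).toEquiv.trans (LinearMap.liftBaseChangeEquiv ℝ).toEquiv)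

theorem measureEquivDual_apply_piR (ν : {ν : L → ℝ // IsAdditiveMeasure ν}) (x : L) :
    measureEquivDual ν (piR L x) = ν.1 x := by
  simp [measureEquivDual, measureEquivAddMonoidHom, piR]

theorem IsAdditiveMeasure.map_bot {ν : L → ℝ} (hν : IsAdditiveMeasure ν) : ν ⊥ = 0 := by
  have := hν ⊥ ⊥ bot_le
  rw [sup_idem] at this
  linarith

theorem IsAdditiveMeasure.map_finset_sup {ν : L → ℝ} (hν : IsAdditiveMeasure ν) {ι : Type*}
    (s : Finset ι) (b : ι → L) (horth : (s : Set ι).Pairwise fun i j => b j ≤ (b i)ᶜ) :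
    ν (s.sup b) = ∑ i ∈ s, ν (b i) := by
  classical
  induction s using Finset.cons_induction with
  | empty => simpa using hν.map_bot
  | cons a s ha ih =>
    rw [Finset.coe_cons, Set.pairwise_insert] at horth
    have hle : s.sup b ≤ (b a)ᶜ :=
      Finset.sup_le fun j hj => (horth.2 j hj fun hja => ha (hja ▸ hj)).1
    rw [Finset.sup_cons, Finset.sum_cons, hν _ _ hle, ih horth.1]

theorem IsAdditiveMeasure.nonneg_of_nonneg_on_generators {ν : L → ℝ} (hν : IsAdditiveMeasure ν)
    (B : Set L) (hgen : ∀ x : L, ∃ (k : ℕ) (b : Fin k → L), (∀ i, b i ∈ B) ∧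
      (∀ i j, i ≠ j → b j ≤ (b i)ᶜ) ∧ x = Finset.univ.sup b)
    (hB : ∀ b ∈ B, 0 ≤ ν b) (x : L) : 0 ≤ ν x := by
  obtain ⟨k, b, hbB, horth, rfl⟩ := hgen x
  rw [hν.map_finset_sup Finset.univ b fun i _ j _ hij => horth i j hij]
  exact Finset.sum_nonneg fun i _ => hB (b i) (hbB i)

end Ortho

/-- Positive real measures on `L` correspond, under the bijection between additive
measures and linear functionals on `M_ℝ`, exactly to the elements of the dual cone of
(the image under `π_ℝ` of) an orthogonal generating set `B`. -/
theorem stmt_13 {L : Type*} [Ortho L] (B : Set L)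
    -- `B` is an orthogonal generating set for `L`:
    (hgen : ∀ x : L, ∃ (k : ℕ) (b : Fin k → L), (∀ i, b i ∈ B) ∧
      (∀ i j, i ≠ j → b j ≤ (b i)ᶜ) ∧ x = Finset.univ.sup b) :
    ∃ e : {ν : L → ℝ // ∀ x y : L, y ≤ xᶜ → ν (x ⊔ y) = ν x + ν y} ≃ (MMR L →ₗ[ℝ] ℝ),
      (∀ ν (x : L), e ν (piR L x) = ν.1 x) ∧
      (∀ ν, (∀ x : L, 0 ≤ ν.1 x) ↔ ∀ b ∈ B, 0 ≤ e ν (piR L b)) := by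
  refine ⟨Ortho.measureEquivDual, Ortho.measureEquivDual_apply_piR, fun ν => ?_⟩
  simp only [Ortho.measureEquivDual_apply_piR]
  exact ⟨fun hpos b _ => hpos b, Ortho.IsAdditiveMeasure.nonneg_of_nonneg_on_generators ν.2 B hgen⟩
end

section
/- Let W be a von Neumann algebra acting on a separable complex Hilbert space. Then: (a) there exists a unique ℂ-linear map ī : M_ℂ → W such that ī ∘ π_ℂ equals the inclusion L(W) ↪ W; (b) the universal complex measure π_ℂ : L(W) → M_ℂ is injective; (c) the image of ī is dense in W with respect to the operator norm. -/
open TensorProduct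

variable {H : Type*} [NormedAddCommGroup H] [InnerProductSpace ℂ H] [CompleteSpace H]

/-- `L(W)`: the projections of a von Neumann algebra `W`, i.e. the self-adjoint
idempotent elements of `W`. -/
def LW (W : VonNeumannAlgebra H) : Type _ :=
  {p : H →L[ℂ] H // p ∈ W ∧ IsSelfAdjoint p ∧ IsIdempotentElem p}

/-- The subgroup of the free abelian group on `L(W)` generated by the elements
`(p ⊔ q) - p - q` for orthogonal projections `p, q` (for orthogonal projections,
`p ⊔ q` is the projection `p + q`). -/
def relW (W : VonNeumannAlgebra H) : AddSubgroup (FreeAbelianGroup (LW W)) :=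
  AddSubgroup.closure {a | ∃ p q r : LW W, p.1 * q.1 = 0 ∧ r.1 = p.1 + q.1 ∧
    a = FreeAbelianGroup.of r - FreeAbelianGroup.of p - FreeAbelianGroup.of q}

/-- `M_ℂ = M(L(W)) ⊗_ℤ ℂ`. -/
abbrev MCW (W : VonNeumannAlgebra H) : Type _ :=
  ℂ ⊗[ℤ] (FreeAbelianGroup (LW W) ⧸ relW W)

/-- The universal complex measure `π_ℂ : L(W) → M_ℂ`. -/
noncomputable def piC (W : VonNeumannAlgebra H) : LW W → MCW W :=
  fun p => (1 : ℂ) ⊗ₜ[ℤ]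
    (QuotientAddGroup.mk (FreeAbelianGroup.of p) : FreeAbelianGroup (LW W) ⧸ relW W)

/-!
The inclusion `L(W) ↪ W` is an additive measure, so it factors through the universal measure;
since `π_ℂ(L(W))` spans `M_ℂ`, the factorization `ī` is unique, `π_ℂ` is injective because
`ī ∘ π_ℂ` is, and the range of `ī` is the span of the projections of `W`.

Density is the spectral theorem in elementary form. For self-adjoint `h ∈ W` let `e_l` be the
projection onto the closure of the range of `(h - l)⁺`; it lies in `W = W''`. Writing
`h - l = (h - l)⁺ - (h - l)⁻` gives `h e_l = l e_l + (h - l)⁺` and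
`h (1 - e_l) = l (1 - e_l) - (h - l)⁻`, so for `l < m` the projection `p = e_l - e_m` satisfies
`l p ≤ h p ≤ m p`. Summing over a grid of mesh `δ` covering `[-‖h‖, ‖h‖]` gives a linear
combination of projections within `δ` of `h`. A general `w ∈ W` is `ℜ w + i ℑ w`.
-/

namespace ContinuousLinearMap

variable {𝕜 E : Type*} [RCLike 𝕜] [NormedAddCommGroup E] [InnerProductSpace 𝕜 E] [CompleteSpace E]

noncomputable def rangeProj (T : E →L[𝕜] E) : E →L[𝕜] E :=
  (T : E →ₗ[𝕜] E).range.topologicalClosure.starProjection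

lemma isStarProjection_rangeProj (T : E →L[𝕜] E) : IsStarProjection T.rangeProj :=
  isStarProjection_starProjection

lemma rangeProj_mul_self (T : E →L[𝕜] E) : T.rangeProj * T = T := by
  ext x
  exact Submodule.starProjection_eq_self_iff.mpr
    (Submodule.le_topologicalClosure _ (LinearMap.mem_range_self (T : E →ₗ[𝕜] E) x))

lemma mul_rangeProj_eq_zero {S T : E →L[𝕜] E} (h : S * T = 0) : S * T.rangeProj = 0 := by
  have hker : (T : E →ₗ[𝕜] E).range.topologicalClosure ≤ (S : E →ₗ[𝕜] E).ker := by
    refine Submodule.topologicalClosure_minimal _ ?_ S.isClosed_ker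
    rintro _ ⟨x, rfl⟩
    exact congr($h x)
  ext x
  exact hker (Submodule.starProjection_apply_mem _ x)

lemma rangeProj_mul_rangeProj_mul (T g : E →L[𝕜] E) :
    T.rangeProj * (T * g).rangeProj = (T * g).rangeProj := by
  have h : (1 - T.rangeProj) * (T * g) = 0 := by
    rw [← mul_assoc, sub_mul, one_mul, rangeProj_mul_self, sub_self, zero_mul]
  have := mul_rangeProj_eq_zero h
  rwa [sub_mul, one_mul, sub_eq_zero, eq_comm] at this

lemma rangeProj_zero : (0 : E →L[𝕜] E).rangeProj = 0 := by
  simpa using mul_rangeProj_eq_zero (S := 1) (mul_zero (1 : E →L[𝕜] E))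

lemma rangeProj_eq_one_of_isUnit {T : E →L[𝕜] E} (hT : IsUnit T) : T.rangeProj = 1 :=
  hT.mul_eq_right.mp (rangeProj_mul_self T)

end ContinuousLinearMap

open ContinuousLinearMap

namespace VonNeumannAlgebra

instance isClosed_toStarSubalgebra (W : VonNeumannAlgebra H) :
    IsClosed (W.toStarSubalgebra : Set (H →L[ℂ] H)) := by
  simpa using W.centralizer_centralizer ▸ Set.isClosed_centralizer _

lemma rangeProj_mem {W : VonNeumannAlgebra H} {T : H →L[ℂ] H} (hT : T ∈ W) :
    T.rangeProj ∈ W := by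
  refine (IsStarProjection.mem_iff (isStarProjection_rangeProj T) W).mpr fun y hy => ?_
  have hyT : y * T = T * y := (mem_commutant_iff.mp hy T hT).symm
  rw [rangeProj, Submodule.range_starProjection, Module.End.mem_invtSubmodule]
  refine Submodule.topologicalClosure_minimal _ ?_
    ((Submodule.isClosed_topologicalClosure _).preimage y.continuous)
  rintro _ ⟨x, rfl⟩
  refine Submodule.le_topologicalClosure _ ⟨y x, ?_⟩
  exact congr($hyT x).symm

end VonNeumannAlgebra

lemma IsStarProjection.mul_eq_star_mul_mul {R : Type*} [Semigroup R] [Star R] {a b p : R}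
    (hp : IsStarProjection p) (hap : Commute a p) (h : a * p = b * p) :
    a * p = star p * b * p :=
  calc a * p = p * (a * p) := by rw [← mul_assoc, ← hap.eq, mul_assoc, hp.isIdempotentElem.eq]
    _ = star p * b * p := by rw [h, hp.isSelfAdjoint.star_eq, mul_assoc]

section PosPart

variable {a : H →L[ℂ] H}

lemma mul_rangeProj_posPart (ha : IsSelfAdjoint a) : a * a⁺.rangeProj = a⁺ := by
  have hpos : a⁺ * a⁺.rangeProj = a⁺ := by
    simpa [(isStarProjection_rangeProj _).isSelfAdjoint.star_eq,
      (IsSelfAdjoint.of_nonneg (CFC.posPart_nonneg a)).star_eq]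
      using congr(star $(rangeProj_mul_self a⁺))
  have hneg : a⁻ * a⁺.rangeProj = 0 := mul_rangeProj_eq_zero (CFC.negPart_mul_posPart a)
  calc a * a⁺.rangeProj = (a⁺ - a⁻) * a⁺.rangeProj := by rw [CFC.posPart_sub_negPart a ha]
    _ = a⁺ := by rw [sub_mul, hpos, hneg, sub_zero]

lemma mul_one_sub_rangeProj_posPart (ha : IsSelfAdjoint a) :
    a * (1 - a⁺.rangeProj) = -a⁻ := by
  rw [mul_sub, mul_one, mul_rangeProj_posPart ha]
  calc a - a⁺ = (a⁺ - a⁻) - a⁺ := by rw [CFC.posPart_sub_negPart a ha]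
    _ = -a⁻ := by abel

lemma commute_rangeProj_posPart (ha : IsSelfAdjoint a) : Commute a a⁺.rangeProj := by
  have h := congr(star $(mul_rangeProj_posPart ha))
  rw [star_mul, (isStarProjection_rangeProj _).isSelfAdjoint.star_eq, ha.star_eq,
    (IsSelfAdjoint.of_nonneg (CFC.posPart_nonneg a)).star_eq] at h
  exact (mul_rangeProj_posPart ha).trans h.symm

variable {p : H →L[ℂ] H}

lemma nonneg_mul_of_rangeProj_posPart_mul_eq (ha : IsSelfAdjoint a) (hp : IsStarProjection p)
    (hap : Commute a p) (hep : a⁺.rangeProj * p = p) : 0 ≤ a * p := by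
  have h : a * p = a⁺ * p := by
    conv_lhs => rw [← hep, ← mul_assoc, mul_rangeProj_posPart ha]
  rw [hp.mul_eq_star_mul_mul hap h]
  exact star_left_conjugate_nonneg (CFC.posPart_nonneg a) p

lemma mul_nonpos_of_rangeProj_posPart_mul_eq_zero (ha : IsSelfAdjoint a)
    (hp : IsStarProjection p) (hap : Commute a p) (hep : a⁺.rangeProj * p = 0) :
    a * p ≤ 0 := by
  have h1 : (1 - a⁺.rangeProj) * p = p := by rw [sub_mul, one_mul, hep, sub_zero]
  have h : a * p = -a⁻ * p := by
    conv_lhs => rw [← h1, ← mul_assoc, mul_one_sub_rangeProj_posPart ha]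
  rw [hp.mul_eq_star_mul_mul hap h, mul_neg, neg_mul, neg_nonpos]
  exact star_left_conjugate_nonneg (CFC.negPart_nonneg a) p

end PosPart

/-- The spectral projection `1_{(l, ∞)}(h)` of a self-adjoint operator `h`. -/
noncomputable def spectralProj (h : H →L[ℂ] H) (l : ℝ) : H →L[ℂ] H :=
  (h - algebraMap ℝ (H →L[ℂ] H) l)⁺.rangeProj

section SpectralProj

variable {h : H →L[ℂ] H}

lemma isStarProjection_spectralProj (h : H →L[ℂ] H) (l : ℝ) :
    IsStarProjection (spectralProj h l) :=
  isStarProjection_rangeProj _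

lemma VonNeumannAlgebra.spectralProj_mem {W : VonNeumannAlgebra H} (hh : h ∈ W) (l : ℝ) :
    spectralProj h l ∈ W :=
  rangeProj_mem <| cfcₙ_mem (s := W.toStarSubalgebra) _ <|
    sub_mem hh (StarSubalgebra.algebraMap_mem _ (l : ℂ))

lemma IsSelfAdjoint.sub_algebraMap {A : Type*} [Ring A] [StarRing A] [Algebra ℝ A]
    [StarModule ℝ A] {h : A} (hh : IsSelfAdjoint h) (l : ℝ) :
    IsSelfAdjoint (h - algebraMap ℝ A l) :=
  hh.sub (.algebraMap _ (.all l))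

lemma IsSelfAdjoint.commute_spectralProj (hh : IsSelfAdjoint h) (l : ℝ) :
    Commute h (spectralProj h l) := by
  unfold spectralProj
  simpa using (commute_rangeProj_posPart (hh.sub_algebraMap l)).add_left
    (Algebra.commute_algebraMap_left l _)

lemma IsSelfAdjoint.posPart_sub_algebraMap_eq_cfc (hh : IsSelfAdjoint h) (l : ℝ) :
    (h - algebraMap ℝ (H →L[ℂ] H) l)⁺ = cfc (fun t : ℝ => (t - l)⁺) h := by
  have hsub : h - algebraMap ℝ (H →L[ℂ] H) l = cfc (fun t : ℝ => t + -l) h := by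
    rw [cfc_add_const (-l) (fun t : ℝ => t) h, cfc_id' ℝ h, map_neg, sub_eq_add_neg]
  rw [CFC.posPart_def, cfcₙ_eq_cfc, hsub, ← cfc_comp' _ _ h]
  simp [sub_eq_add_neg]

namespace IsSelfAdjoint

variable (hh : IsSelfAdjoint h) {l m : ℝ}
include hh

lemma spectralProj_mul_spectralProj_of_lt (hlm : l < m) :
    spectralProj h l * spectralProj h m = spectralProj h m := by
  -- `(t - m)⁺ = (t - l)⁺ * g t` with `g` continuous, so `(h - m)⁺` factors through `(h - l)⁺`
  set g : ℝ → ℝ := fun t => (t - m)⁺ / max (t - l) (m - l)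
  have hden : ∀ t, max (t - l) (m - l) ≠ 0 := fun t =>
    (lt_of_lt_of_le (sub_pos.mpr hlm) (le_max_right _ _)).ne'
  have hfac : (h - algebraMap ℝ (H →L[ℂ] H) m)⁺ =
      (h - algebraMap ℝ (H →L[ℂ] H) l)⁺ * cfc g h := by
    rw [hh.posPart_sub_algebraMap_eq_cfc, hh.posPart_sub_algebraMap_eq_cfc, ← cfc_mul _ _ h]
    refine cfc_congr fun t _ => ?_
    rcases le_total t m with htm | htm
    · simp [g, posPart_eq_zero.mpr (sub_nonpos.mpr htm)]
    · have htl : m - l ≤ t - l := by linarith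
      simp only [g, posPart_eq_self.mpr (sub_nonneg.mpr htm),
        posPart_eq_self.mpr (sub_nonneg.mpr (hlm.le.trans htm)), max_eq_left htl]
      rw [mul_div_cancel₀ _ (by linarith : (0 : ℝ) < t - l).ne']
  rw [spectralProj, spectralProj, hfac]
  exact rangeProj_mul_rangeProj_mul _ _

lemma spectralProj_mul_spectralProj_of_lt' (hlm : l < m) :
    spectralProj h m * spectralProj h l = spectralProj h m := by
  simpa [(isStarProjection_spectralProj h l).isSelfAdjoint.star_eq,
    (isStarProjection_spectralProj h m).isSelfAdjoint.star_eq]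
    using congr(star $(hh.spectralProj_mul_spectralProj_of_lt hlm))

lemma spectralProj_eq_zero (hl : ‖h‖ ≤ l) : spectralProj h l = 0 := by
  have hle : h - algebraMap ℝ (H →L[ℂ] H) l ≤ 0 :=
    sub_nonpos.mpr (hh.le_algebraMap_norm_self.trans (algebraMap_mono _ hl))
  rw [spectralProj, (CFC.posPart_eq_zero_iff _ (hh.sub_algebraMap l)).mpr hle, rangeProj_zero]

lemma spectralProj_eq_one (hl : l < -‖h‖) : spectralProj h l = 1 := by
  have hlow : algebraMap ℝ (H →L[ℂ] H) (-‖h‖ - l) ≤ h - algebraMap ℝ (H →L[ℂ] H) l := by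
    rw [map_sub, map_neg]
    exact sub_le_sub_right hh.neg_algebraMap_norm_le_self _
  have hpos : IsStrictlyPositive (algebraMap ℝ (H →L[ℂ] H) (-‖h‖ - l)) :=
    isStrictlyPositive_algebraMap (by linarith)
  rw [spectralProj, (CFC.posPart_eq_self _).mpr (hpos.nonneg.trans hlow)]
  exact rangeProj_eq_one_of_isUnit (CStarAlgebra.isUnit_of_le _ hlow hpos)

lemma isStarProjection_sub_spectralProj (hlm : l < m) :
    IsStarProjection (spectralProj h l - spectralProj h m) :=
  (isStarProjection_spectralProj h m).sub_of_mul_eq_right (isStarProjection_spectralProj h l)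
    (hh.spectralProj_mul_spectralProj_of_lt hlm)

lemma commute_sub_spectralProj (r : ℝ) :
    Commute (h - algebraMap ℝ (H →L[ℂ] H) r) (spectralProj h l - spectralProj h m) :=
  ((hh.commute_spectralProj l).sub_right (hh.commute_spectralProj m)).sub_left
    (Algebra.commute_algebraMap_left r _)

lemma smul_le_mul_sub_spectralProj (hlm : l < m) :
    l • (spectralProj h l - spectralProj h m) ≤ h * (spectralProj h l - spectralProj h m) := by
  have hep : spectralProj h l * (spectralProj h l - spectralProj h m) =
      spectralProj h l - spectralProj h m := by
    rw [mul_sub, (isStarProjection_spectralProj h l).isIdempotentElem.eq,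
      hh.spectralProj_mul_spectralProj_of_lt hlm]
  have := nonneg_mul_of_rangeProj_posPart_mul_eq (hh.sub_algebraMap l)
    (hh.isStarProjection_sub_spectralProj hlm) (hh.commute_sub_spectralProj l) hep
  rwa [sub_mul, ← Algebra.smul_def, sub_nonneg] at this

lemma mul_sub_spectralProj_le_smul (hlm : l < m) :
    h * (spectralProj h l - spectralProj h m) ≤ m • (spectralProj h l - spectralProj h m) := by
  have hep : spectralProj h m * (spectralProj h l - spectralProj h m) = 0 := by
    rw [mul_sub, (isStarProjection_spectralProj h m).isIdempotentElem.eq,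
      hh.spectralProj_mul_spectralProj_of_lt' hlm, sub_self]
  have := mul_nonpos_of_rangeProj_posPart_mul_eq_zero (hh.sub_algebraMap m)
    (hh.isStarProjection_sub_spectralProj hlm) (hh.commute_sub_spectralProj m) hep
  rwa [sub_mul, ← Algebra.smul_def, sub_nonpos] at this

end IsSelfAdjoint

end SpectralProj

open Finset in
lemma CStarAlgebra.norm_sum_smul_sub_le {A ι : Type*} [CStarAlgebra A] [PartialOrder A]
    [StarOrderedRing A] {s : Finset ι} {p : ι → A} {l : ι → ℝ} {a : A} {δ : ℝ} (hδ : 0 ≤ δ)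
    (hp : ∑ i ∈ s, p i = 1) (hlow : ∀ i ∈ s, l i • p i ≤ a * p i)
    (hup : ∀ i ∈ s, a * p i ≤ (l i + δ) • p i) :
    ‖∑ i ∈ s, (l i + δ) • p i - a‖ ≤ δ := by
  have ha : ∑ i ∈ s, (l i + δ) • p i - a = ∑ i ∈ s, ((l i + δ) • p i - a * p i) := by
    rw [sum_sub_distrib, ← mul_sum, hp, mul_one]
  have hδ1 : algebraMap ℝ A δ = ∑ i ∈ s, δ • p i := by
    rw [← smul_sum, hp, Algebra.algebraMap_eq_smul_one]
  rw [ha, norm_le_iff_le_algebraMap _ hδ (sum_nonneg fun i hi => sub_nonneg.mpr (hup i hi)), hδ1]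
  refine sum_le_sum fun i hi => ?_
  rw [add_smul, add_sub_right_comm]
  exact add_le_of_nonpos_left (sub_nonpos.mpr (hlow i hi))

open Finset in
theorem IsSelfAdjoint.mem_closure_span_spectralProj {h : H →L[ℂ] H} (hh : IsSelfAdjoint h) :
    h ∈ (Submodule.span ℂ (Set.range (spectralProj h))).topologicalClosure := by
  rw [← SetLike.mem_coe, Submodule.topologicalClosure_coe, Metric.mem_closure_iff]
  intro ε hε
  set δ := ε / 2
  have hδ : 0 < δ := half_pos hε
  -- a grid `l 0 < -‖h‖ < ... ≤ ‖h‖ ≤ l n` of mesh `δ`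
  set n := ⌈2 * ‖h‖ / δ⌉₊ + 1
  set l : ℕ → ℝ := fun i => i * δ - ‖h‖ - δ
  have hl : ∀ i, l (i + 1) = l i + δ := fun i => by simp only [l]; push_cast; ring
  set p : ℕ → H →L[ℂ] H := fun i => spectralProj h (l i) - spectralProj h (l (i + 1))
  have hlt : ∀ i, l i < l (i + 1) := fun i => by rw [hl]; linarith
  have hsum : ∑ i ∈ range n, p i = 1 := by
    rw [sum_range_sub', hh.spectralProj_eq_one (by simp [l]; linarith), hh.spectralProj_eq_zero,
      sub_zero]
    have : 2 * ‖h‖ / δ ≤ ⌈2 * ‖h‖ / δ⌉₊ := Nat.le_ceil _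
    rw [div_le_iff₀ hδ] at this
    simp only [l, n]
    push_cast
    linarith
  refine ⟨∑ i ∈ range n, (l i + δ) • p i, ?_, ?_⟩
  · refine Submodule.sum_mem _ fun i _ => Submodule.smul_of_tower_mem _ _ ?_
    exact Submodule.sub_mem _ (Submodule.subset_span ⟨_, rfl⟩) (Submodule.subset_span ⟨_, rfl⟩)
  · rw [dist_eq_norm, norm_sub_rev]
    refine (CStarAlgebra.norm_sum_smul_sub_le hδ.le hsum (fun i _ => ?_) (fun i _ => ?_)).trans_lt
      (half_lt_self hε)
    · exact hh.smul_le_mul_sub_spectralProj (hlt i)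
    · rw [← hl]
      exact hh.mul_sub_spectralProj_le_smul (hlt i)

theorem VonNeumannAlgebra.mem_closure_span_starProjections (W : VonNeumannAlgebra H)
    {w : H →L[ℂ] H} (hw : w ∈ W) :
    w ∈ (Submodule.span ℂ {e | e ∈ W ∧ IsStarProjection e}).topologicalClosure := by
  have hsa : ∀ h ∈ W, IsSelfAdjoint h →
      h ∈ (Submodule.span ℂ {e | e ∈ W ∧ IsStarProjection e}).topologicalClosure := by
    intro h hW hh
    refine Submodule.topologicalClosure_mono (Submodule.span_mono ?_)
      hh.mem_closure_span_spectralProj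
    rintro _ ⟨l, rfl⟩
    exact ⟨spectralProj_mem hW l, isStarProjection_spectralProj h l⟩
  have hre : (realPart w : H →L[ℂ] H) ∈ W := by
    rw [realPart_apply_coe]
    exact W.toStarSubalgebra.toSubalgebra.toSubmodule.smul_of_tower_mem _
      (add_mem hw (star_mem hw) : w + star w ∈ W)
  have him : (imaginaryPart w : H →L[ℂ] H) ∈ W := by
    rw [imaginaryPart_apply_coe]
    exact W.toStarSubalgebra.toSubalgebra.toSubmodule.smul_mem _
      (Submodule.smul_of_tower_mem _ _ (sub_mem hw (star_mem hw) : w - star w ∈ W))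
  rw [← realPart_add_I_smul_imaginaryPart w]
  exact add_mem (hsa _ hre (realPart w).2)
    (Submodule.smul_mem _ _ (hsa _ him (imaginaryPart w).2))

section UniversalMeasure

variable {W : VonNeumannAlgebra H} {V : Type*} [AddCommGroup V] [Module ℂ V]

def LW.IsAdditiveMeasure (ν : LW W → V) : Prop :=
  ∀ p q r : LW W, p.1 * q.1 = 0 → r.1 = p.1 + q.1 → ν r = ν p + ν q

namespace MCW

noncomputable def lift (ν : LW W → V) (hν : LW.IsAdditiveMeasure ν) : MCW W →ₗ[ℂ] V :=
  LinearMap.liftBaseChange ℂ <| AddMonoidHom.toIntLinearMap <|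
    QuotientAddGroup.lift (relW W) (FreeAbelianGroup.lift ν) <| by
      rw [relW, AddSubgroup.closure_le]
      rintro _ ⟨p, q, r, hpq, hr, rfl⟩
      simp [hν p q r hpq hr]

lemma lift_piC (ν : LW W → V) (hν : LW.IsAdditiveMeasure ν) (p : LW W) :
    lift ν hν (piC W p) = ν p := by
  simp [lift, piC]

variable (W) in
lemma span_range_piC : Submodule.span ℂ (Set.range (piC W)) = ⊤ := by
  rw [eq_top_iff]
  rintro m -
  induction m using TensorProduct.induction_on with
  | zero => exact zero_mem _
  | add m n hm hn => exact add_mem hm hn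
  | tmul c x =>
    rw [← mul_one c, ← smul_eq_mul, ← smul_tmul']
    refine Submodule.smul_mem _ c ?_
    induction x using QuotientAddGroup.induction_on with | H x => ?_
    induction x using FreeAbelianGroup.induction_on with
    | zero => simp
    | of p => exact Submodule.subset_span ⟨p, rfl⟩
    | neg p hp => rw [QuotientAddGroup.mk_neg, tmul_neg]; exact neg_mem hp
    | add x y hx hy => rw [QuotientAddGroup.mk_add, tmul_add]; exact add_mem hx hy

lemma ext {i j : MCW W →ₗ[ℂ] V} (h : ∀ p, i (piC W p) = j (piC W p)) : i = j :=
  LinearMap.ext_on_range (span_range_piC W) h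

lemma range_eq_span_starProjections {i : MCW W →ₗ[ℂ] (H →L[ℂ] H)}
    (hi : ∀ p : LW W, i (piC W p) = p.1) :
    LinearMap.range i = Submodule.span ℂ {e | e ∈ W ∧ IsStarProjection e} := by
  have hval : i ∘ piC W = Subtype.val := funext hi
  rw [LinearMap.range_eq_map, ← span_range_piC W, Submodule.map_span, ← Set.range_comp, hval]
  congr 1
  ext e
  exact ⟨fun ⟨p, hp⟩ => hp ▸ ⟨p.2.1, p.2.2.2, p.2.2.1⟩,
    fun ⟨hW, hp⟩ => ⟨⟨e, hW, hp.isSelfAdjoint, hp.isIdempotentElem⟩, rfl⟩⟩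

end MCW

end UniversalMeasure

theorem stmt_16_general (W : VonNeumannAlgebra H) :
    (∃! i : MCW W →ₗ[ℂ] (H →L[ℂ] H), ∀ p : LW W, i (piC W p) = p.1) ∧
    Function.Injective (piC W) ∧
    (∀ i : MCW W →ₗ[ℂ] (H →L[ℂ] H), (∀ p : LW W, i (piC W p) = p.1) →
      (∀ m : MCW W, i m ∈ W) ∧ ∀ w : H →L[ℂ] H, w ∈ W → w ∈ closure (Set.range ⇑i)) := by
  let ι := MCW.lift (W := W) Subtype.val fun _ _ _ _ hr => hr
  have hι : ∀ p : LW W, ι (piC W p) = p.1 := MCW.lift_piC _ _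
  refine ⟨⟨ι, hι, fun j hj => MCW.ext fun p => by rw [hj, hι]⟩,
    fun p q hpq => Subtype.ext (by simpa only [hι] using congr(ι $hpq)), fun i hi => ⟨?_, ?_⟩⟩
  · intro m
    have hle : Submodule.span ℂ {e | e ∈ W ∧ IsStarProjection e} ≤
        W.toStarSubalgebra.toSubalgebra.toSubmodule :=
      Submodule.span_le.mpr fun e he => he.1
    exact hle (MCW.range_eq_span_starProjections hi ▸ LinearMap.mem_range_self i m)
  · intro w hw
    rw [← LinearMap.coe_range, ← Submodule.topologicalClosure_coe,
      MCW.range_eq_span_starProjections hi]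
    exact W.mem_closure_span_starProjections hw

/-- For a von Neumann algebra `W` on a separable complex Hilbert space: (a) there is a
unique `ℂ`-linear map `ī : M_ℂ → W` with `ī ∘ π_ℂ` the inclusion `L(W) ↪ W`; (b) the
universal complex measure `π_ℂ` is injective; (c) the image of `ī` lies in `W` and is
dense in `W` for the operator norm. -/
theorem stmt_16 [TopologicalSpace.SeparableSpace H] (W : VonNeumannAlgebra H) :
    (∃! i : MCW W →ₗ[ℂ] (H →L[ℂ] H), ∀ p : LW W, i (piC W p) = p.1) ∧
    Function.Injective (piC W) ∧
    (∀ i : MCW W →ₗ[ℂ] (H →L[ℂ] H), (∀ p : LW W, i (piC W p) = p.1) →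
      (∀ m : MCW W, i m ∈ W) ∧ ∀ w : H →L[ℂ] H, w ∈ W → w ∈ closure (Set.range ⇑i)) :=
  stmt_16_general W
end
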